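/- Let X be a finite-dimensional real Banach space of dimension at least 2, and suppose L_X(t₀) = 2t₀² − 4t₀ + 2 for some t₀ ∈ [0, 1/2). Then X is not uniformly non-square: for every δ ∈ (0, 1) there exist x, y ∈ X with ‖x‖ = ‖y‖ = 1 such that ‖x + y‖ > 2(1 − δ) and ‖x − y‖ > 2(1 − δ). -/

import Mathlib

/-- The geometric constant L_X(t) defined via isosceles orthogonality. -/
noncomputable def LX (X : Type*) [NormedAddCommGroup X] [NormedSpace ℝ X] (t : ℝ) : ℝ :=
  sSup {r : ℝ | ∃ x y : X, (x, y) ≠ (0, 0) ∧ ‖x + y‖ = ‖x - y‖ ∧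
    r = (‖t • x + (1 - t) • y‖ ^ 2 + ‖(1 - t) • x + t • y‖ ^ 2) / ‖x + y‖ ^ 2}

/-!
For `‖x + y‖ = ‖x - y‖ = N` and `t ∈ [0, 1/2)`, the vector `t • x + (1 - t) • y` is bounded in norm
both by `(1 - t) N` (write it as `½ (x + y) + (½ - t) (y - x)`) and by `(1 - 2t) ‖y‖ + t N`
(write it as `(1 - 2t) y + t (x + y)`). Multiplying the two bounds, and doing the same with `x`
and `y` exchanged, shows that the quotient in `L_X(t)` is at most
`(1 - t) ((1 - 2t) (‖x‖ + ‖y‖) / N + 2t) ≤ 2 (1 - t)²`. Hence if `L_X(t) = 2 (1 - t)²` there are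
isosceles orthogonal pairs with `‖x‖ + ‖y‖` arbitrarily close to `2N`, and since `‖x‖, ‖y‖ ≤ N`
both are close to `N`. The unit vectors `a = (x + y) / N`, `b = (x - y) / N` then have
`‖a + b‖ = 2‖x‖ / N` and `‖a - b‖ = 2‖y‖ / N` close to `2`.
-/

section IsoscelesOrthogonal

variable {X : Type*} [NormedAddCommGroup X] {x y : X} {t : ℝ}

lemma norm_add_eq_norm_sub_comm (h : ‖x + y‖ = ‖x - y‖) : ‖y + x‖ = ‖y - x‖ := by
  rwa [add_comm, norm_sub_rev]

variable [NormedSpace ℝ X]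

lemma norm_le_norm_add_of_norm_add_eq_norm_sub (h : ‖x + y‖ = ‖x - y‖) :
    ‖x‖ ≤ ‖x + y‖ ∧ ‖y‖ ≤ ‖x + y‖ := by
  have h2x : (2 : ℝ) • x = (x + y) + (x - y) := by module
  have h2y : (2 : ℝ) • y = (x + y) - (x - y) := by module
  have hx := norm_add_le (x + y) (x - y)
  have hy := norm_sub_le (x + y) (x - y)
  rw [← h2x, norm_smul, Real.norm_two, ← h] at hx
  rw [← h2y, norm_smul, Real.norm_two, ← h] at hy
  constructor <;> linarith

lemma add_ne_zero_of_norm_add_eq_norm_sub (h : ‖x + y‖ = ‖x - y‖) (hxy : (x, y) ≠ (0, 0)) :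
    x + y ≠ 0 := by
  intro hsum
  obtain ⟨hx, hy⟩ := norm_le_norm_add_of_norm_add_eq_norm_sub h
  rw [hsum, norm_zero, norm_le_zero_iff] at hx hy
  exact hxy (by rw [hx, hy])

lemma norm_smul_add_one_sub_smul_le_of_norm_add_eq_norm_sub (h : ‖x + y‖ = ‖x - y‖)
    (ht : t ≤ 1 / 2) : ‖t • x + (1 - t) • y‖ ≤ (1 - t) * ‖x + y‖ :=
  calc ‖t • x + (1 - t) • y‖ = ‖(1 / 2 : ℝ) • (x + y) + (1 / 2 - t) • (y - x)‖ := by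
        congr 1; module
    _ ≤ ‖(1 / 2 : ℝ) • (x + y)‖ + ‖(1 / 2 - t) • (y - x)‖ := norm_add_le _ _
    _ = (1 - t) * ‖x + y‖ := by
        rw [norm_smul, norm_smul, Real.norm_of_nonneg (by norm_num),
          Real.norm_of_nonneg (by linarith), norm_sub_rev, ← h]
        ring

lemma norm_smul_add_one_sub_smul_le (ht₀ : 0 ≤ t) (ht : t ≤ 1 / 2) :
    ‖t • x + (1 - t) • y‖ ≤ (1 - 2 * t) * ‖y‖ + t * ‖x + y‖ :=
  calc ‖t • x + (1 - t) • y‖ = ‖(1 - 2 * t) • y + t • (x + y)‖ := by congr 1; module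
    _ ≤ ‖(1 - 2 * t) • y‖ + ‖t • (x + y)‖ := norm_add_le _ _
    _ = (1 - 2 * t) * ‖y‖ + t * ‖x + y‖ := by
        rw [norm_smul, norm_smul, Real.norm_of_nonneg (by linarith), Real.norm_of_nonneg ht₀]

lemma sq_norm_smul_add_one_sub_smul_le (h : ‖x + y‖ = ‖x - y‖) (ht₀ : 0 ≤ t) (ht : t ≤ 1 / 2) :
    ‖t • x + (1 - t) • y‖ ^ 2 ≤ (1 - t) * ‖x + y‖ * ((1 - 2 * t) * ‖y‖ + t * ‖x + y‖) := by
  rw [sq]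
  exact mul_le_mul (norm_smul_add_one_sub_smul_le_of_norm_add_eq_norm_sub h ht)
    (norm_smul_add_one_sub_smul_le ht₀ ht) (norm_nonneg _) (by nlinarith [norm_nonneg (x + y)])

lemma sq_norm_add_sq_norm_le_of_norm_add_eq_norm_sub (h : ‖x + y‖ = ‖x - y‖) (ht₀ : 0 ≤ t)
    (ht : t ≤ 1 / 2) :
    ‖t • x + (1 - t) • y‖ ^ 2 + ‖(1 - t) • x + t • y‖ ^ 2 ≤
      (1 - t) * ‖x + y‖ * ((1 - 2 * t) * (‖x‖ + ‖y‖) + 2 * t * ‖x + y‖) := by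
  have hxy := sq_norm_smul_add_one_sub_smul_le h ht₀ ht
  have hyx := sq_norm_smul_add_one_sub_smul_le (norm_add_eq_norm_sub_comm h) ht₀ ht
  rw [add_comm (t • y), add_comm y] at hyx
  linarith

lemma exists_lt_of_lt_LX [Nontrivial X] {r : ℝ} (hr : r < LX X t) :
    ∃ x y : X, x + y ≠ 0 ∧ ‖x + y‖ = ‖x - y‖ ∧
      r < (‖t • x + (1 - t) • y‖ ^ 2 + ‖(1 - t) • x + t • y‖ ^ 2) / ‖x + y‖ ^ 2 := by
  obtain ⟨v, hv⟩ := exists_ne (0 : X)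
  rw [LX] at hr
  obtain ⟨_, ⟨x, y, hxy, h, rfl⟩, hr⟩ := exists_lt_of_lt_csSup
    (by exact ⟨_, v, 0, by simp [hv], by simp, rfl⟩) hr
  exact ⟨x, y, add_ne_zero_of_norm_add_eq_norm_sub h hxy, h, hr⟩

lemma exists_norm_add_norm_gt_of_LX_eq [Nontrivial X] (ht : t ∈ Set.Ico (0 : ℝ) (1 / 2))
    (hL : LX X t = 2 * (1 - t) ^ 2) {η : ℝ} (hη : 0 < η) :
    ∃ x y : X, x + y ≠ 0 ∧ ‖x + y‖ = ‖x - y‖ ∧ (2 - η) * ‖x + y‖ < ‖x‖ + ‖y‖ := by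
  obtain ⟨ht₀, ht⟩ := ht
  have hpos : 0 < (1 - t) * (1 - 2 * t) := mul_pos (by linarith) (by linarith)
  have hgap : 0 < (1 - t) * (1 - 2 * t) * η := mul_pos hpos hη
  obtain ⟨x, y, hxy, h, hr⟩ := exists_lt_of_lt_LX (X := X) (t := t)
    (r := 2 * (1 - t) ^ 2 - (1 - t) * (1 - 2 * t) * η) (by linarith)
  refine ⟨x, y, hxy, h, ?_⟩
  have hN : 0 < ‖x + y‖ := norm_pos_iff.mpr hxy
  rw [lt_div_iff₀ (by positivity)] at hr
  have hbound := sq_norm_add_sq_norm_le_of_norm_add_eq_norm_sub h ht₀ ht.le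
  have key : (1 - t) * (1 - 2 * t) * ‖x + y‖ * ((2 - η) * ‖x + y‖ - (‖x‖ + ‖y‖)) < 0 := by
    linear_combination hr + hbound
  linarith [neg_of_mul_neg_right key (mul_pos hpos hN).le]

lemma exists_unit_near_square_of_norm_add_norm_gt (hxy : x + y ≠ 0) (h : ‖x + y‖ = ‖x - y‖)
    {δ : ℝ} (hgt : (2 - δ) * ‖x + y‖ < ‖x‖ + ‖y‖) :
    ∃ a b : X, ‖a‖ = 1 ∧ ‖b‖ = 1 ∧ 2 * (1 - δ) < ‖a + b‖ ∧ 2 * (1 - δ) < ‖a - b‖ := by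
  set N := ‖x + y‖
  have hN : 0 < N := norm_pos_iff.mpr hxy
  obtain ⟨hx, hy⟩ := norm_le_norm_add_of_norm_add_eq_norm_sub h
  have hnorm (v : X) : ‖N⁻¹ • v‖ = ‖v‖ / N := by
    rw [norm_smul, norm_inv, norm_norm, inv_mul_eq_div]
  have hsum : N⁻¹ • (x + y) + N⁻¹ • (x - y) = N⁻¹ • (2 : ℝ) • x := by module
  have hdiff : N⁻¹ • (x + y) - N⁻¹ • (x - y) = N⁻¹ • (2 : ℝ) • y := by module
  refine ⟨N⁻¹ • (x + y), N⁻¹ • (x - y), ?_, ?_, ?_, ?_⟩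
  · rw [hnorm, div_self hN.ne']
  · rw [hnorm, ← h, div_self hN.ne']
  · rw [hsum, hnorm, norm_smul, Real.norm_two, lt_div_iff₀ hN]
    linarith
  · rw [hdiff, hnorm, norm_smul, Real.norm_two, lt_div_iff₀ hN]
    linarith

end IsoscelesOrthogonal

theorem stmt_16_general (X : Type*) [NormedAddCommGroup X] [NormedSpace ℝ X]
    (hdim : 2 ≤ Module.finrank ℝ X)
    (t₀ : ℝ) (ht₀ : t₀ ∈ Set.Ico (0 : ℝ) (1 / 2))
    (hL : LX X t₀ = 2 * t₀ ^ 2 - 4 * t₀ + 2) :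
    ∀ δ ∈ Set.Ioo (0 : ℝ) 1, ∃ x y : X, ‖x‖ = 1 ∧ ‖y‖ = 1 ∧
      2 * (1 - δ) < ‖x + y‖ ∧ 2 * (1 - δ) < ‖x - y‖ := by
  intro δ hδ
  have : Nontrivial X := Module.nontrivial_of_finrank_pos (R := ℝ) (by omega)
  obtain ⟨x, y, hxy, h, hgt⟩ :=
    exists_norm_add_norm_gt_of_LX_eq ht₀ (by rw [hL]; ring) hδ.1
  exact exists_unit_near_square_of_norm_add_norm_gt hxy h hgt

theorem stmt_16 (X : Type*) [NormedAddCommGroup X] [NormedSpace ℝ X]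
    [FiniteDimensional ℝ X] (hdim : 2 ≤ Module.finrank ℝ X)
    (t₀ : ℝ) (ht₀ : t₀ ∈ Set.Ico (0 : ℝ) (1 / 2))
    (hL : LX X t₀ = 2 * t₀ ^ 2 - 4 * t₀ + 2) :
    ∀ δ ∈ Set.Ioo (0 : ℝ) 1, ∃ x y : X, ‖x‖ = 1 ∧ ‖y‖ = 1 ∧
      2 * (1 - δ) < ‖x + y‖ ∧ 2 * (1 - δ) < ‖x - y‖ :=
  stmt_16_general X hdim t₀ ht₀ hL
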